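/- In the graph C_{3k+1}, distinct vertices have distinct neighborhoods; that is, the graph is twin-free. -/

import Mathlib

/-- The graph `C_{3k+1}`: vertices are vectors in `(Z/2)^{3k+1}`,
adjacent iff their Hamming distance is at least `2k+1`. -/
def hypercubeGraph (k : ℕ) : SimpleGraph (Fin (3 * k + 1) → ZMod 2) where
  Adj x y := 2 * k + 1 ≤ hammingDist x y
  symm := ⟨by intro x y h; rwa [hammingDist_comm]⟩
  loopless := ⟨by intro x h; rw [hammingDist_self] at h; omega⟩

/-!
Twins are not adjacent, since the graph is loopless, so `d(x, y) ≤ 2k + 1`. Changing `x` on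
`2k + 1 - d(x, y)` of the `3k + 1 - d(x, y)` coordinates where `x` and `y` agree gives a
neighbour `z` of `x` with `d(y, z) = 2k + 1 - d(x, y)`; as `z` is also a neighbour of `y`,
`d(x, y) = 0`.
-/

theorem SimpleGraph.not_adj_of_neighborSet_eq {V : Type*} (G : SimpleGraph V) {x y : V}
    (h : G.neighborSet x = G.neighborSet y) : ¬G.Adj x y := fun hxy =>
  G.loopless.irrefl y (show y ∈ G.neighborSet y from h ▸ hxy)

theorem exists_hammingDist_eq_and_eq_sub {ι β : Type*} [Fintype ι] [DecidableEq β] [Nontrivial β]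
    (x y : ι → β) {r : ℕ} (hxy : hammingDist x y ≤ r) (hr : r ≤ Fintype.card ι) :
    ∃ z : ι → β, hammingDist x z = r ∧ hammingDist y z = r - hammingDist x y := by
  classical
  set A : Finset ι := {i | x i ≠ y i}
  have hA : hammingDist x y = A.card := rfl
  obtain ⟨S, hSA, hS⟩ : ∃ S ⊆ Aᶜ, S.card = r - hammingDist x y :=
    Finset.exists_subset_card_eq (by rw [Finset.card_compl, hA]; omega)
  have heq : ∀ i ∈ S, x i = y i := fun i hi => by simpa [A] using hSA hi
  choose other hother using fun b : β => exists_ne b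
  let z : ι → β := fun i => if i ∈ S then other (x i) else y i
  have hxz : ({i | x i ≠ z i} : Finset ι) = A ∪ S := by
    ext i
    by_cases hi : i ∈ S
    · simp [z, hi, A, (hother (x i)).symm]
    · simp [z, hi, A]
  have hyz : ({i | y i ≠ z i} : Finset ι) = S := by
    ext i
    by_cases hi : i ∈ S
    · simp [z, hi, heq i hi, (hother (y i)).symm]
    · simp [z, hi]
  have hAS : Disjoint A S := Finset.disjoint_of_subset_right hSA disjoint_compl_right
  refine ⟨z, ?_, ?_⟩
  · rw [hammingDist, hxz, Finset.card_union_of_disjoint hAS, ← hA, hS]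
    omega
  · rw [hammingDist, hyz, hS]

theorem stmt_3_general (k : ℕ) (x y : Fin (3 * k + 1) → ZMod 2)
    (h : (hypercubeGraph k).neighborSet x = (hypercubeGraph k).neighborSet y) :
    x = y := by
  have hxy : hammingDist x y ≤ 2 * k + 1 :=
    (not_le.mp ((hypercubeGraph k).not_adj_of_neighborSet_eq h)).le
  obtain ⟨z, hxz, hyz⟩ :=
    exists_hammingDist_eq_and_eq_sub x y hxy (by rw [Fintype.card_fin]; omega)
  have hz : 2 * k + 1 ≤ hammingDist y z :=
    show z ∈ (hypercubeGraph k).neighborSet y from h ▸ hxz.ge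
  exact hammingDist_eq_zero.mp (by omega)

theorem stmt_3 (k : ℕ) (hk : 0 < k) (x y : Fin (3 * k + 1) → ZMod 2)
    (h : (hypercubeGraph k).neighborSet x = (hypercubeGraph k).neighborSet y) :
    x = y :=
  stmt_3_general k x y h
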